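/- Let F satisfy conditions (Ha) and (Hb), and define 1/m(x) = ∫ₓ^∞ H(t)/A²(t) dt and ℓ(x) = ∫₀ˣ H(t) dt. Then m(x) ≤ A(x) ≤ ℓ(x) for all sufficiently large x. -/

import Mathlib

open MeasureTheory Filter Set Asymptotics Topology

/-- Tail of a distribution: `1 - F(x) = P[X > x]`. -/
noncomputable def tailF (μ : Measure ℝ) (x : ℝ) : ℝ := (μ (Set.Ioi x)).toReal

/-- A function is slowly varying at infinity. -/
def SlowlyVarying (f : ℝ → ℝ) : Prop :=
  (∀ᶠ x in atTop, 0 < f x) ∧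
    ∀ c : ℝ, 1 < c → Tendsto (fun x => f (c * x) / f x) atTop (𝓝 1)

/-- Two-sided tail `H(x) = P[|X| > x] = 1 - F(x) + F(-x-0)`. -/
noncomputable def Hf (μ : Measure ℝ) (x : ℝ) : ℝ := (μ {y : ℝ | x < |y|}).toReal

/-- `K(x) = P[X > x] - P[X < -x] = 1 - F(x) - F(-x-0)`. -/
noncomputable def Kf (μ : Measure ℝ) (x : ℝ) : ℝ :=
  (μ (Set.Ioi x)).toReal - (μ (Set.Iio (-x))).toReal

/-- `A(x) = ∫₀ˣ K(t) dt`. -/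
noncomputable def Af (μ : Measure ℝ) (x : ℝ) : ℝ := ∫ t in (0:ℝ)..x, Kf μ t

/-- `ℓ(x) = ∫₀ˣ H(t) dt`. -/
noncomputable def ellH (μ : Measure ℝ) (x : ℝ) : ℝ := ∫ t in (0:ℝ)..x, Hf μ t

/-- `m(x)`, defined by `1/m(x) = ∫ₓ^∞ H(t)/A²(t) dt`. -/
noncomputable def mF (μ : Measure ℝ) (x : ℝ) : ℝ :=
  (∫ t in Set.Ioi x, Hf μ t / (Af μ t) ^ 2)⁻¹

/-- `r₊(x) = ∫ₓ^∞ (1-F(t))/A²(t) dt`. -/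
noncomputable def rPlus (μ : Measure ℝ) (x : ℝ) : ℝ :=
  ∫ t in Set.Ioi x, tailF μ t / (Af μ t) ^ 2

/-- `r₋(x) = ∫ₓ^∞ F(-t)/A²(t) dt`. -/
noncomputable def rMinus (μ : Measure ℝ) (x : ℝ) : ℝ :=
  ∫ t in Set.Ioi x, (μ (Set.Iio (-t))).toReal / (Af μ t) ^ 2

/-- Condition (Ha): `A(x)/(x H(x)) → ∞`, i.e. positive relative stability. -/
def HaCond (μ : Measure ℝ) : Prop :=
  Tendsto (fun x => Af μ x / (x * Hf μ x)) atTop atTop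

/-- Condition (Hb): `∫_{x₀}^∞ H(x)/A²(x) dx < ∞` for some `x₀ > 0`
with `A` positive on `[x₀, ∞)`. -/
def HbCond (μ : Measure ℝ) : Prop :=
  ∃ x₀ : ℝ, 0 < x₀ ∧ (∀ x ≥ x₀, 0 < Af μ x) ∧
    IntegrableOn (fun x => Hf μ x / (Af μ x) ^ 2) (Set.Ioi x₀)

/-- `X` is arithmetic: `X/h ∈ ℤ` almost surely for some `h > 0`. -/
def IsArith (μ : Measure ℝ) : Prop :=
  ∃ h : ℝ, 0 < h ∧ μ {x : ℝ | ∃ n : ℤ, x = n * h} = 1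

/-- Characteristic function `φ(θ) = E[e^{iθX}]`. -/
noncomputable def charF (μ : Measure ℝ) (θ : ℝ) : ℂ :=
  ∫ x, Complex.exp (Complex.I * θ * x) ∂μ

/-!
For `t ≥ x` the pointwise bound `K ≤ H` gives `A(t) ≤ B(t) := A(x) + ℓ(t) - ℓ(x)`.
The function `B` has right derivative `H` (a tail is right-continuous) and tends to
infinity, because `E|X| = ∞` means `∫₀^∞ H = ∞`. Hence
`1/A(x) = 1/B(x) = ∫ₓ^∞ H/B² ≤ ∫ₓ^∞ H/A² = 1/m(x)`.
The upper bound `A(x) ≤ ℓ(x)` is `K ≤ H` integrated over `[0, x]`.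
-/

open ProbabilityTheory

lemma IntervalIntegrable.div_sq_of_continuousOn {f G : ℝ → ℝ} {a b : ℝ}
    (hf : IntervalIntegrable f volume a b) (hG : ContinuousOn G (uIcc a b))
    (hG_ne : ∀ t ∈ uIcc a b, G t ≠ 0) :
    IntervalIntegrable (fun t => f t / G t ^ 2) volume a b := by
  simpa only [div_eq_mul_inv, Pi.inv_apply, Pi.pow_apply] using
    hf.mul_continuousOn ((hG.pow 2).inv₀ fun t ht => pow_ne_zero 2 (hG_ne t ht))

lemma integral_div_sq_eq_inv_sub_inv {f G : ℝ → ℝ} {a b : ℝ} (hab : a ≤ b)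
    (hG : ContinuousOn G (Icc a b)) (hG_pos : ∀ t ∈ Icc a b, 0 < G t)
    (hG_deriv : ∀ t ∈ Ioo a b, HasDerivWithinAt G (f t) (Ioi t) t)
    (hf : IntervalIntegrable f volume a b) :
    ∫ t in a..b, f t / G t ^ 2 = (G a)⁻¹ - (G b)⁻¹ := by
  have hint : IntervalIntegrable (fun t => f t / G t ^ 2) volume a b :=
    hf.div_sq_of_continuousOn (by rwa [uIcc_of_le hab])
      (fun t ht => (hG_pos t (by rwa [uIcc_of_le hab] at ht)).ne')
  have h := intervalIntegral.integral_eq_sub_of_hasDeriv_right_of_le hab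
    (hG.inv₀ fun t ht => (hG_pos t ht).ne').neg
    (fun t ht => by
      simpa only [neg_div, neg_neg] using
        ((hG_deriv t ht).inv (hG_pos t (Ioo_subset_Icc_self ht)).ne').neg) hint
  rw [h, Pi.neg_apply, Pi.neg_apply, Pi.inv_apply, Pi.inv_apply]
  ring

lemma inv_le_integral_Ioi_div_sq {f g G : ℝ → ℝ} {a : ℝ}
    (hG : ContinuousOn G (Ici a)) (hG_deriv : ∀ t ∈ Ioi a, HasDerivWithinAt G (f t) (Ioi t) t)
    (hG_top : Tendsto G atTop atTop) (hf : ∀ b, IntervalIntegrable f volume a b)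
    (hf_nonneg : ∀ t ∈ Ioi a, 0 ≤ f t) (hg_pos : ∀ t ∈ Ici a, 0 < g t)
    (hg_le : ∀ t ∈ Ici a, g t ≤ G t) (hint : IntegrableOn (fun t => f t / g t ^ 2) (Ioi a)) :
    (G a)⁻¹ ≤ ∫ t in Ioi a, f t / g t ^ 2 := by
  have hG_pos : ∀ t ∈ Ici a, 0 < G t := fun t ht => (hg_pos t ht).trans_le (hg_le t ht)
  have hbound : ∀ b ≥ a, (G a)⁻¹ - (G b)⁻¹ ≤ ∫ t in Ioi a, f t / g t ^ 2 := by
    intro b hab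
    have hIcc : uIcc a b ⊆ Ici a := by
      rw [uIcc_of_le hab]
      exact Icc_subset_Ici_self
    rw [← integral_div_sq_eq_inv_sub_inv hab (hG.mono Icc_subset_Ici_self)
      (fun t ht => hG_pos t ht.1) (fun t ht => hG_deriv t ht.1) (hf b)]
    calc ∫ t in a..b, f t / G t ^ 2
        ≤ ∫ t in a..b, f t / g t ^ 2 := by
          refine intervalIntegral.integral_mono_on_of_le_Ioo hab ?_ ?_ fun t ht => ?_
          · exact (hf b).div_sq_of_continuousOn (hG.mono hIcc) fun t ht =>
              (hG_pos t (hIcc ht)).ne'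
          · exact (intervalIntegrable_iff_integrableOn_Ioc_of_le hab).2
              (hint.mono_set Ioc_subset_Ioi_self)
          · have hgt := hg_pos t ht.1.le
            gcongr
            · exact hf_nonneg t ht.1
            · exact hg_le t ht.1.le
      _ ≤ ∫ t in Ioi a, f t / g t ^ 2 := by
          rw [intervalIntegral.integral_of_le hab]
          exact setIntegral_mono_set hint
            (ae_restrict_of_forall_mem measurableSet_Ioi fun t ht =>
              div_nonneg (hf_nonneg t ht) (sq_nonneg _))
            Ioc_subset_Ioi_self.eventuallyLE
  have hlim : Tendsto (fun b => (G a)⁻¹ - (G b)⁻¹) atTop (𝓝 (G a)⁻¹) := by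
    simpa using tendsto_const_nhds.sub hG_top.inv_tendsto_atTop
  exact le_of_tendsto hlim ((eventually_ge_atTop a).mono hbound)

lemma tendsto_intervalIntegral_atTop_of_not_integrableOn {f : ℝ → ℝ} {a : ℝ}
    (hf_nonneg : ∀ t, 0 ≤ f t) (hf : ∀ b, IntervalIntegrable f volume a b)
    (hf_not : ¬ IntegrableOn f (Ioi a)) :
    Tendsto (fun x => ∫ t in a..x, f t) atTop atTop := by
  refine tendsto_atTop_atTop_of_monotone (fun x y hxy => ?_) ?_
  · rw [← intervalIntegral.integral_add_adjacent_intervals (hf x) ((hf x).symm.trans (hf y))]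
    linarith [intervalIntegral.integral_nonneg (μ := volume) hxy fun t _ => hf_nonneg t]
  · by_contra! hbdd
    obtain ⟨C, hC⟩ := hbdd
    refine hf_not (integrableOn_Ioi_of_intervalIntegral_norm_bounded C a (fun _ => (hf _).1)
      tendsto_id (Eventually.of_forall fun x => ?_))
    simp only [Real.norm_of_nonneg (hf_nonneg _)]
    exact (hC x).le

lemma Hf_nonneg (μ : Measure ℝ) (t : ℝ) : 0 ≤ Hf μ t := ENNReal.toReal_nonneg

section Distribution

variable (μ : Measure ℝ) [IsProbabilityMeasure μ]

lemma Hf_eq_one_sub_cdf_map_abs (t : ℝ) : Hf μ t = 1 - cdf (μ.map abs) t := by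
  have hmeas : Measurable (abs : ℝ → ℝ) := measurable_id.abs
  have := Measure.isProbabilityMeasure_map (μ := μ) hmeas.aemeasurable
  rw [cdf_eq_real, map_measureReal_apply hmeas measurableSet_Iic, ← probReal_compl_eq_one_sub
    (hmeas measurableSet_Iic), ← preimage_compl, compl_Iic]
  rfl

lemma Hf_antitone : Antitone (Hf μ) := fun s t hst => by
  simp only [Hf_eq_one_sub_cdf_map_abs]
  exact sub_le_sub_left ((cdf _).mono hst) 1

lemma Hf_continuousWithinAt_Ioi (t : ℝ) : ContinuousWithinAt (Hf μ) (Ioi t) t := by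
  simp only [funext (Hf_eq_one_sub_cdf_map_abs μ)]
  exact (continuousWithinAt_const.sub ((cdf _).right_continuous t)).mono Ioi_subset_Ici_self

lemma intervalIntegrable_Hf (a b : ℝ) : IntervalIntegrable (Hf μ) volume a b :=
  (Hf_antitone μ).intervalIntegrable

lemma Kf_le_Hf (t : ℝ) : Kf μ t ≤ Hf μ t := calc
  Kf μ t ≤ (μ (Ioi t)).toReal := sub_le_self _ ENNReal.toReal_nonneg
  _ ≤ Hf μ t := ENNReal.toReal_mono (measure_ne_top μ _)
      (measure_mono fun y (hy : t < y) => hy.trans_le (le_abs_self y))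

lemma intervalIntegrable_Kf (a b : ℝ) : IntervalIntegrable (Kf μ) volume a b :=
  (Antitone.intervalIntegrable fun _ _ hst => ENNReal.toReal_mono (measure_ne_top μ _)
      (measure_mono (Ioi_subset_Ioi hst))).sub
    (Antitone.intervalIntegrable fun _ _ hst => ENNReal.toReal_mono (measure_ne_top μ _)
      (measure_mono (Iio_subset_Iio (neg_le_neg hst))))

lemma not_integrableOn_Hf_Ioi_zero (hmean : ∫⁻ x, ENNReal.ofReal |x| ∂μ = ⊤) :
    ¬ IntegrableOn (Hf μ) (Ioi 0) := by
  intro hint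
  have hlayer := lintegral_eq_lintegral_meas_lt μ (Eventually.of_forall fun x => abs_nonneg x)
    measurable_id.abs.aemeasurable
  refine hint.2.ne (hmean ▸ hlayer ▸ lintegral_congr fun t => ?_)
  rw [Hf, Real.enorm_of_nonneg ENNReal.toReal_nonneg, ENNReal.ofReal_toReal (measure_ne_top μ _)]

lemma tendsto_ellH_atTop (hmean : ∫⁻ x, ENNReal.ofReal |x| ∂μ = ⊤) :
    Tendsto (ellH μ) atTop atTop :=
  tendsto_intervalIntegral_atTop_of_not_integrableOn (Hf_nonneg μ) (intervalIntegrable_Hf μ 0)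
    (not_integrableOn_Hf_Ioi_zero μ hmean)

lemma Af_sub_Af_le_ellH_sub_ellH {a b : ℝ} (hab : a ≤ b) :
    Af μ b - Af μ a ≤ ellH μ b - ellH μ a := by
  rw [Af, Af, ellH, ellH, intervalIntegral.integral_interval_sub_left (intervalIntegrable_Kf μ 0 b)
    (intervalIntegrable_Kf μ 0 a), intervalIntegral.integral_interval_sub_left
    (intervalIntegrable_Hf μ 0 b) (intervalIntegrable_Hf μ 0 a)]
  exact intervalIntegral.integral_mono_on hab (intervalIntegrable_Kf μ a b)
    (intervalIntegrable_Hf μ a b) fun t _ => Kf_le_Hf μ t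

lemma hasDerivWithinAt_ellH (t : ℝ) : HasDerivWithinAt (ellH μ) (Hf μ t) (Ioi t) t :=
  (intervalIntegral.integral_hasDerivWithinAt_right (s := Ici t) (intervalIntegrable_Hf μ 0 t)
    (Hf_antitone μ).measurable.stronglyMeasurable.stronglyMeasurableAtFilter
    (Hf_continuousWithinAt_Ioi μ t)).mono Ioi_subset_Ici_self

lemma inv_Af_le_integral_Ioi (hmean : ∫⁻ x, ENNReal.ofReal |x| ∂μ = ⊤) {x : ℝ}
    (hA_pos : ∀ t ≥ x, 0 < Af μ t)
    (hint : IntegrableOn (fun t => Hf μ t / Af μ t ^ 2) (Ioi x)) :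
    (Af μ x)⁻¹ ≤ ∫ t in Ioi x, Hf μ t / Af μ t ^ 2 := by
  have hellH_cont : Continuous (ellH μ) :=
    intervalIntegral.continuous_primitive (intervalIntegrable_Hf μ) 0
  simpa using inv_le_integral_Ioi_div_sq (G := fun t => Af μ x + (ellH μ t - ellH μ x))
    (continuous_const.add (hellH_cont.sub continuous_const)).continuousOn
    (fun t _ => ((hasDerivWithinAt_ellH μ t).sub_const _).const_add _)
    (tendsto_atTop_add_const_left _ _
      (tendsto_atTop_add_const_right _ _ (tendsto_ellH_atTop μ hmean)))
    (intervalIntegrable_Hf μ x) (fun t _ => Hf_nonneg μ t) hA_pos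
    (fun t ht => by linarith [Af_sub_Af_le_ellH_sub_ellH μ (mem_Ici.1 ht)]) hint

end Distribution

theorem stmt10_general (μ : Measure ℝ) [IsProbabilityMeasure μ]
    (hmean : ∫⁻ x, ENNReal.ofReal |x| ∂μ = ⊤)
    (hHb : HbCond μ) :
    ∀ᶠ x in atTop, mF μ x ≤ Af μ x ∧ Af μ x ≤ ellH μ x := by
  obtain ⟨x₀, hx₀, hA_pos, hint⟩ := hHb
  filter_upwards [eventually_ge_atTop x₀] with x hx
  constructor
  · exact inv_le_of_inv_le₀ (hA_pos x hx) (inv_Af_le_integral_Ioi μ hmean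
      (fun t ht => hA_pos t (hx.trans ht)) (hint.mono_set (Ioi_subset_Ioi hx)))
  · simpa [Af, ellH] using Af_sub_Af_le_ellH_sub_ellH μ (hx₀.le.trans hx)

/-- Under (Ha) and (Hb), `m(x) ≤ A(x) ≤ ℓ(x)` for all sufficiently large `x`. -/
theorem stmt10 (μ : Measure ℝ) [IsProbabilityMeasure μ]
    (hmean : ∫⁻ x, ENNReal.ofReal |x| ∂μ = ⊤)
    (hHa : HaCond μ) (hHb : HbCond μ) :
    ∀ᶠ x in atTop, mF μ x ≤ Af μ x ∧ Af μ x ≤ ellH μ x :=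
  stmt10_general μ hmean hHb
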